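/- Let F and Θ_j for every j ∈ J be strictly convex, where J ≠ ∅, and let S be convex. Suppose that for any x, y ∈ S with x ≠ y there exists j ∈ J such that L(x,y) ∩ Θ_j = ∅, and that for every x ∈ S the projection Π_F(x; Θ_j) is nonempty for all j ∈ J. Then the function T₂(x) := Σ_{j∈J} T_F(x; Θ_j) is strictly convex on S. -/

import Mathlib

/-!
Take nearest points `u ∈ Π_F(x; Θ_j)`, `v ∈ Π_F(y; Θ_j)`. Since `t • u + s • v ∈ Θ_j` and the gauge
is sublinear, `T_F(t • x + s • y; Θ_j) ≤ t T_F(x; Θ_j) + s T_F(y; Θ_j)` for every `j`. The inequality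
is strict for an index `j` with `L(x,y) ∩ Θ_j = ∅`: if `u ≠ v`, then `t • u + s • v` is interior to
`Θ_j` while `t • x + s • y ∉ Θ_j`, so one can step from it towards `t • x + s • y` inside `Θ_j`; if
`u = v`, then `u ∉ L(x,y)`, so `u - x` and `u - y` do not lie on a common ray, and the gauge of the
strictly convex `F` is strictly subadditive on such pairs.
-/

open Set Pointwise Filter Topology Bornology Function

variable {X : Type*} [NormedAddCommGroup X] [NormedSpace ℝ X]

/-- The Minkowski gauge of `F`: `ρ_F(x) = inf {t ≥ 0 : x ∈ t • F}`. -/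
noncomputable def rhoF (F : Set X) (x : X) : ℝ :=
  sInf {t : ℝ | 0 ≤ t ∧ x ∈ t • F}

/-- The maximal time function `C_F(x; Q) = sup {ρ_F(q - x) : q ∈ Q}`. -/
noncomputable def maxTime (F Q : Set X) (x : X) : ℝ :=
  sSup ((fun q => rhoF F (q - x)) '' Q)

/-- The minimal time function `T_F(x; Θ) = inf {ρ_F(q - x) : q ∈ Θ}`. -/
noncomputable def minTime (F Θ : Set X) (x : X) : ℝ :=
  sInf ((fun q => rhoF F (q - x)) '' Θ)

/-- The projection `Π_F(x; Θ) = {u ∈ Θ : ρ_F(u - x) = T_F(x; Θ)}`. -/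
def nearProj (F Θ : Set X) (x : X) : Set X :=
  {u ∈ Θ | rhoF F (u - x) = minTime F Θ x}

/-- The line through `x` and `y`: `L(x,y) = {t•x + (1-t)•y : t ∈ ℝ}`. -/
def lineThrough (x y : X) : Set X :=
  {z : X | ∃ t : ℝ, z = t • x + (1 - t) • y}

section Gauge

variable {F : Set X}

lemma rhoF_eq_gauge (hF : F.Nonempty) : rhoF F = gauge F := by
  funext x
  rcases eq_or_ne x 0 with rfl | hx
  · have h0 : (0 : X) ∈ (0 : ℝ) • F := by simp [zero_smul_set hF]
    rw [gauge_zero]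
    exact le_antisymm (csInf_le ⟨0, fun t ht => ht.1⟩ ⟨le_rfl, h0⟩)
      (le_csInf ⟨0, le_rfl, h0⟩ fun t ht => ht.1)
  · rw [rhoF, gauge_def]
    congr 1
    ext t
    refine ⟨fun ⟨ht, hxt⟩ => ⟨ht.lt_of_ne ?_, hxt⟩, fun ⟨ht, hxt⟩ => ⟨le_of_lt ht, hxt⟩⟩
    rintro rfl
    simp [zero_smul_set hF, hx] at hxt

lemma gauge_sub_add_sub_le (hF : Convex ℝ F) (hF0 : (0 : X) ∈ interior F)
    {x y u v : X} {t s : ℝ} (ht : 0 ≤ t) (hs : 0 ≤ s) :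
    gauge F (t • u + s • v - (t • x + s • y)) ≤ t * gauge F (u - x) + s * gauge F (v - y) := by
  have habs : Absorbent ℝ F := absorbent_nhds_zero (mem_interior_iff_mem_nhds.mp hF0)
  calc gauge F (t • u + s • v - (t • x + s • y))
      = gauge F (t • (u - x) + s • (v - y)) := by congr 1; module
    _ ≤ gauge F (t • (u - x)) + gauge F (s • (v - y)) := gauge_add_le hF habs _ _
    _ = t * gauge F (u - x) + s * gauge F (v - y) := by
      rw [gauge_smul_of_nonneg ht, gauge_smul_of_nonneg hs, smul_eq_mul, smul_eq_mul]

/-- With `α = gauge F a`, `β = gauge F b`, the points `a / α ≠ b / β` lie in `F`, and their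
combination with weights `α / (α + β)`, `β / (α + β)` is `(a + b) / (α + β)`. -/
lemma gauge_add_lt_of_not_sameRay (hFc : IsClosed F) (hFb : IsBounded F)
    (hF0 : (0 : X) ∈ interior F) (hFs : StrictConvex ℝ F) {a b : X} (hab : ¬ SameRay ℝ a b) :
    gauge F (a + b) < gauge F a + gauge F b := by
  have hnhds : F ∈ 𝓝 (0 : X) := mem_interior_iff_mem_nhds.mp hF0
  have hpos : ∀ {c : X}, c ≠ 0 → 0 < gauge F c := fun hc =>
    (gauge_pos (absorbent_nhds_zero hnhds) ((NormedSpace.isVonNBounded_iff ℝ).mpr hFb)).mpr hc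
  have hnormalize : ∀ {c : X}, c ≠ 0 → (gauge F c)⁻¹ • c ∈ F := fun {c} hc => by
    have h1 : gauge F ((gauge F c)⁻¹ • c) ≤ 1 := by
      rw [gauge_smul_of_nonneg (inv_nonneg.mpr (hpos hc).le), smul_eq_mul,
        inv_mul_cancel₀ (hpos hc).ne']
    simpa [hFc.closure_eq] using (gauge_le_one_iff_mem_closure hFs.convex hnhds).mp h1
  have ha : a ≠ 0 := fun h => hab (h ▸ SameRay.zero_left b)
  have hb : b ≠ 0 := fun h => hab (h ▸ SameRay.zero_right a)
  set α := gauge F a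
  set β := gauge F b
  have hα : 0 < α := hpos ha
  have hβ : 0 < β := hpos hb
  have hne : α⁻¹ • a ≠ β⁻¹ • b := fun h => hab <| by
    have : a = (α * β⁻¹) • b := by rw [← smul_smul, ← h, smul_inv_smul₀ hα.ne']
    exact this ▸ SameRay.sameRay_pos_smul_left b (by positivity)
  have hmem := hFs (hnormalize ha) (hnormalize hb) hne (div_pos hα (add_pos hα hβ))
    (div_pos hβ (add_pos hα hβ)) (by field_simp)
  have hcombo : (α / (α + β)) • α⁻¹ • a + (β / (α + β)) • β⁻¹ • b = (α + β)⁻¹ • (a + b) := by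
    rw [smul_smul, smul_smul, smul_add]
    congr 2 <;> field_simp
  rw [hcombo, ← gauge_lt_one_iff_mem_interior hFs.convex hnhds,
    gauge_smul_of_nonneg (inv_nonneg.mpr (add_pos hα hβ).le), smul_eq_mul,
    inv_mul_lt_iff₀ (add_pos hα hβ), mul_one] at hmem
  exact hmem

end Gauge

section MinTime

variable {F Θ : Set X}

lemma minTime_le_gauge_sub (hF : F.Nonempty) {w : X} (hw : w ∈ Θ) (x : X) :
    minTime F Θ x ≤ gauge F (w - x) := by
  rw [minTime, rhoF_eq_gauge hF]
  exact csInf_le ⟨0, by rintro r ⟨q, -, rfl⟩; exact gauge_nonneg _⟩ ⟨w, hw, rfl⟩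

lemma gauge_sub_eq_minTime (hF : F.Nonempty) {x u : X} (hu : u ∈ nearProj F Θ x) :
    gauge F (u - x) = minTime F Θ x := by
  rw [← hu.2, rhoF_eq_gauge hF]

/-- From an interior point `w` of `Θ` one can move a little towards `z` and stay in `Θ`. -/
lemma minTime_lt_gauge_sub_of_mem_interior (hFb : IsBounded F) (hF0 : (0 : X) ∈ interior F)
    {w z : X} (hw : w ∈ interior Θ) (hwz : w ≠ z) :
    minTime F Θ z < gauge F (w - z) := by
  have hgauge : 0 < gauge F (w - z) :=
    (gauge_pos (absorbent_nhds_zero (mem_interior_iff_mem_nhds.mp hF0))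
      ((NormedSpace.isVonNBounded_iff ℝ).mpr hFb)).mpr (sub_ne_zero.mpr hwz)
  have hpath : Tendsto (fun ε : ℝ => w + ε • (z - w)) (𝓝[>] 0) (𝓝 w) := by
    have : Continuous fun ε : ℝ => w + ε • (z - w) := by fun_prop
    simpa using (this.tendsto 0).mono_left nhdsWithin_le_nhds
  obtain ⟨ε, hεΘ, hε⟩ := ((hpath.eventually (mem_interior_iff_mem_nhds.mp hw)).and
    (Ioo_mem_nhdsGT one_pos)).exists
  calc minTime F Θ z ≤ gauge F (w + ε • (z - w) - z) :=
        minTime_le_gauge_sub ⟨0, interior_subset hF0⟩ hεΘ z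
    _ = (1 - ε) * gauge F (w - z) := by
        rw [show w + ε • (z - w) - z = (1 - ε) • (w - z) by module,
          gauge_smul_of_nonneg (by linarith [hε.2]), smul_eq_mul]
    _ < gauge F (w - z) := by nlinarith [hε.1]

lemma minTime_combo_le (hFconv : Convex ℝ F) (hF0 : (0 : X) ∈ interior F) (hΘ : Convex ℝ Θ)
    {x y u v : X} (hu : u ∈ nearProj F Θ x) (hv : v ∈ nearProj F Θ y)
    {t s : ℝ} (ht : 0 ≤ t) (hs : 0 ≤ s) (hts : t + s = 1) :
    minTime F Θ (t • x + s • y) ≤ t * minTime F Θ x + s * minTime F Θ y := by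
  have hF : F.Nonempty := ⟨0, interior_subset hF0⟩
  rw [← gauge_sub_eq_minTime hF hu, ← gauge_sub_eq_minTime hF hv]
  exact (minTime_le_gauge_sub hF (hΘ hu.1 hv.1 ht hs hts) _).trans
    (gauge_sub_add_sub_le hFconv hF0 ht hs)

end MinTime

lemma mem_lineThrough_of_sameRay_sub {x y u : X} (hxy : x ≠ y)
    (h : SameRay ℝ (u - x) (u - y)) : u ∈ lineThrough x y := by
  rcases eq_or_ne (u - x) 0 with hux | hux
  · exact ⟨1, by simp [sub_eq_zero.mp hux]⟩
  rcases eq_or_ne (u - y) 0 with huy | huy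
  · exact ⟨0, by simp [sub_eq_zero.mp huy]⟩
  obtain ⟨r₁, r₂, hr₁, hr₂, hr⟩ := h.exists_pos hux huy
  have hr₁₂ : r₁ - r₂ ≠ 0 := by
    rintro hr₁₂
    obtain rfl : r₁ = r₂ := sub_eq_zero.mp hr₁₂
    exact hxy (sub_right_injective (smul_right_injective X hr₁.ne' hr))
  have hu : (r₁ - r₂) • u = r₁ • x - r₂ • y := by linear_combination (norm := module) hr
  have hc : (r₁ - r₂)⁻¹ * (r₁ - r₂) = 1 := inv_mul_cancel₀ hr₁₂
  refine ⟨(r₁ - r₂)⁻¹ * r₁, ?_⟩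
  rw [← inv_smul_smul₀ hr₁₂ u, hu,
    show 1 - (r₁ - r₂)⁻¹ * r₁ = -((r₁ - r₂)⁻¹ * r₂) by linear_combination -hc]
  module

lemma minTime_combo_lt {F Θ : Set X} (hFc : IsClosed F) (hFb : IsBounded F)
    (hF0 : (0 : X) ∈ interior F) (hFs : StrictConvex ℝ F) (hΘ : StrictConvex ℝ Θ)
    {x y u v : X} (hxy : x ≠ y) (hL : lineThrough x y ∩ Θ = ∅)
    (hu : u ∈ nearProj F Θ x) (hv : v ∈ nearProj F Θ y)
    {t s : ℝ} (ht : 0 < t) (hs : 0 < s) (hts : t + s = 1) :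
    minTime F Θ (t • x + s • y) < t * minTime F Θ x + s * minTime F Θ y := by
  have hF : F.Nonempty := ⟨0, interior_subset hF0⟩
  have hoff : ∀ {w}, w ∈ Θ → w ∉ lineThrough x y := fun hw hwL =>
    (Set.eq_empty_iff_forall_notMem.mp hL) _ ⟨hwL, hw⟩
  rw [← gauge_sub_eq_minTime hF hu, ← gauge_sub_eq_minTime hF hv]
  rcases eq_or_ne u v with rfl | huv
  · have hray : ¬ SameRay ℝ (t • (u - x)) (s • (u - y)) := fun h =>
      hoff hu.1 <| mem_lineThrough_of_sameRay_sub hxy <| by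
        simpa [smul_smul, ht.ne', hs.ne'] using
          (h.pos_smul_left (inv_pos.2 ht)).pos_smul_right (inv_pos.2 hs)
    calc minTime F Θ (t • x + s • y) ≤ gauge F (u - (t • x + s • y)) :=
          minTime_le_gauge_sub hF hu.1 _
      _ = gauge F (t • (u - x) + s • (u - y)) := by
          congr 1; linear_combination (norm := module) -hts • u
      _ < gauge F (t • (u - x)) + gauge F (s • (u - y)) :=
          gauge_add_lt_of_not_sameRay hFc hFb hF0 hFs hray
      _ = t * gauge F (u - x) + s * gauge F (u - y) := by
          rw [gauge_smul_of_nonneg ht.le, gauge_smul_of_nonneg hs.le, smul_eq_mul, smul_eq_mul]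
  · have hz : t • x + s • y ∈ lineThrough x y := ⟨t, by rw [← hts, add_sub_cancel_left]⟩
    have hw := hΘ hu.1 hv.1 huv ht hs hts
    calc minTime F Θ (t • x + s • y) < gauge F (t • u + s • v - (t • x + s • y)) :=
          minTime_lt_gauge_sub_of_mem_interior hFb hF0 hw
            fun h => hoff (interior_subset hw) (h ▸ hz)
      _ ≤ t * gauge F (u - x) + s * gauge F (v - y) :=
          gauge_sub_add_sub_le hFs.convex hF0 ht.le hs.le

theorem stmt17_general {κ : Type*} (F : Set X) (J : Finset κ) (Θ : κ → Set X) (S : Set X)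
    (hFc : IsClosed F) (hFb : IsBounded F)
    (hF0 : (0 : X) ∈ interior F) (hFs : StrictConvex ℝ F)
    (hΘs : ∀ j ∈ J, StrictConvex ℝ (Θ j))
    (hSconv : Convex ℝ S)
    (hline : ∀ x ∈ S, ∀ y ∈ S, x ≠ y → ∃ j ∈ J, lineThrough x y ∩ Θ j = ∅)
    (hPi : ∀ x ∈ S, ∀ j ∈ J, (nearProj F (Θ j) x).Nonempty) :
    StrictConvexOn ℝ S (fun x => ∑ j ∈ J, minTime F (Θ j) x) := by
  refine ⟨hSconv, fun x hx y hy hxy t s ht hs hts => ?_⟩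
  obtain ⟨j₀, hj₀, hL⟩ := hline x hx y hy hxy
  simp only [smul_eq_mul, Finset.mul_sum, ← Finset.sum_add_distrib]
  refine Finset.sum_lt_sum (fun j hj => ?_) ⟨j₀, hj₀, ?_⟩
  · obtain ⟨u, hu⟩ := hPi x hx j hj
    obtain ⟨v, hv⟩ := hPi y hy j hj
    exact minTime_combo_le hFs.convex hF0 (hΘs j hj).convex hu hv ht.le hs.le hts
  · obtain ⟨u, hu⟩ := hPi x hx j₀ hj₀
    obtain ⟨v, hv⟩ := hPi y hy j₀ hj₀
    exact minTime_combo_lt hFc hFb hF0 hFs (hΘs j₀ hj₀) hxy hL hu hv ht hs hts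

/-- Proposition 3.12. -/
theorem stmt17 {κ : Type*} (F : Set X) (J : Finset κ) (Θ : κ → Set X) (S : Set X)
    (hFc : IsClosed F) (hFb : IsBounded F) (hFconv : Convex ℝ F)
    (hF0 : (0 : X) ∈ interior F) (hFs : StrictConvex ℝ F)
    (hΘne : ∀ j ∈ J, (Θ j).Nonempty) (hΘc : ∀ j ∈ J, IsClosed (Θ j))
    (hΘs : ∀ j ∈ J, StrictConvex ℝ (Θ j))
    (hSne : S.Nonempty) (hSc : IsClosed S) (hSconv : Convex ℝ S)
    (hJ : J.Nonempty)
    (hline : ∀ x ∈ S, ∀ y ∈ S, x ≠ y → ∃ j ∈ J, lineThrough x y ∩ Θ j = ∅)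
    (hPi : ∀ x ∈ S, ∀ j ∈ J, (nearProj F (Θ j) x).Nonempty) :
    StrictConvexOn ℝ S (fun x => ∑ j ∈ J, minTime F (Θ j) x) :=
  stmt17_general F J Θ S hFc hFb hF0 hFs hΘs hSconv hline hPi
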